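/- arXiv:1604.00761 — 4 statements merged into one kernel-verified Lean document; each statement's English description precedes it below -/
import Mathlib

section
/- Let C be a binary [n,k,d] linear code with 1 ≤ a ≤ d-1 and b ≥ 0. If 2^{-(n-k)} · Σ_{u=1}^{a} C(n,u) · Σ_{i=0}^{b} i·C(n-k, b-i) + 2^{-(n-k)^2} · Σ_{r=0}^{n-k} (n-k-r) · [n-k choose r]_2 · Π_{i=0}^{r-1} (2^{n-k} - 2^i) < 1, then there exists an (n-k) × n parity-check matrix for C containing no (u,v)-trapping set for any 1 ≤ u ≤ a and 0 ≤ v ≤ b-1; hence the collective (a,b)-trapping redundancy of C equals n-k. -/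
/-!
Quotienting by `C` gives one parity-check map `L₀ : F₂ⁿ → F₂ⁿ⁻ᵏ`, and `g ∘ L₀` is another one for
every linear automorphism `g` of `F₂ⁿ⁻ᵏ`. The column sum of its matrix over a set `S` of columns is
`g (L₀ 1_S)`, and `L₀ 1_S ≠ 0` whenever `1 ≤ |S| ≤ a < d`. Automorphisms act transitively on nonzero
vectors, so for a fixed nonzero `σ` the vector `g σ` is equidistributed on the `2ⁿ⁻ᵏ - 1` nonzero
vectors. A union bound over the at most `∑_{u ≤ a} C(n,u)` sets `S` and the `∑_{1 ≤ v < b} C(n-k,v)`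
nonzero vectors of weight `< b` then yields a good `g`, and the first summand of the bound is small
enough for this; the second summand, which accounts for singular matrices in a sampling over all
matrices, is not needed here. Rank–nullity shows that no parity-check matrix has fewer rows.
-/

open Finset

/-- The Gaussian binomial coefficient with base 2, as a real number:
`[x choose y]_2 = ∏_{i=0}^{y-1} (2^{x-i} - 1)/(2^{i+1} - 1)`. -/
noncomputable def gaussBinom2 (x y : ℕ) : ℝ :=
  ∏ i ∈ Finset.range y, ((2 : ℝ) ^ (x - i) - 1) / ((2 : ℝ) ^ (i + 1) - 1)

/-- The dual code of a binary linear code `C ⊆ F_2^n`. -/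
def dualCode {n : ℕ} (C : Submodule (ZMod 2) (Fin n → ZMod 2)) :
    Set (Fin n → ZMod 2) :=
  {v | ∀ c ∈ C, ∑ j, v j * c j = 0}

/-- `H` (given by its rows) is a parity-check matrix for `C`:
its right kernel is exactly `C`. -/
def IsParityCheck {n : ℕ} {ι : Type*} (H : ι → Fin n → ZMod 2)
    (C : Submodule (ZMod 2) (Fin n → ZMod 2)) : Prop :=
  ∀ x : Fin n → ZMod 2, (∀ i, ∑ j, H i j * x j = 0) ↔ x ∈ C

/-- `H` contains an `(a,b)`-trapping set: `a` distinct columns such that exactly `b`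
rows of the corresponding submatrix have odd Hamming weight. -/
def HasTrappingSet {n : ℕ} {ι : Type*} (H : ι → Fin n → ZMod 2) (a b : ℕ) : Prop :=
  ∃ S : Finset (Fin n), S.card = a ∧
    Set.ncard {i : ι | ∑ j ∈ S, H i j = 1} = b

/-- The collective `(a,b)`-trapping redundancy of `C`: the least number of rows of a
parity-check matrix for `C` containing no `(s,t)`-trapping set for `1 ≤ s ≤ a`,
`0 ≤ t ≤ b-1`. -/
noncomputable def collectiveTrappingRedundancy {n : ℕ}
    (C : Submodule (ZMod 2) (Fin n → ZMod 2)) (a b : ℕ) : ℕ :=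
  sInf {m | ∃ H : Fin m → Fin n → ZMod 2, IsParityCheck H C ∧
    ∀ s t : ℕ, 1 ≤ s → s ≤ a → t < b → ¬ HasTrappingSet H s t}

/-- The probabilistic upper bound expression of Theorem 1, as a real number. -/
noncomputable def trappingBound (n k a b t : ℕ) : ℝ :=
  (∑ u ∈ Finset.Icc 1 a, (n.choose u : ℝ) *
      ∑ i ∈ Finset.range (b + 1), (i : ℝ) * (t.choose (b - i) : ℝ)) / 2 ^ t
    + (∑ r ∈ Finset.range (n - k + 1), ((n - k - r : ℕ) : ℝ) * gaussBinom2 (n - k) r *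
        ∏ i ∈ Finset.range r, ((2 : ℝ) ^ t - 2 ^ i)) / 2 ^ (t * (n - k))



namespace MulAction

variable {G X : Type*} [Group G] [MulAction G X] [Fintype G] [DecidableEq X]

theorem card_filter_smul_eq_of_mem_orbit (x : X) {y y' : X} (hy : y' ∈ orbit G y) :
    #{g : G | g • x = y} = #{g : G | g • x = y'} := by
  obtain ⟨h, rfl⟩ := hy
  refine card_nbij' (h * ·) (h⁻¹ * ·) ?_ ?_ ?_ ?_ <;> intro g <;> simp [mul_smul, inv_smul_eq_iff]

theorem card_filter_smul_mem_mul_card (x : X) {B O : Finset X}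
    (hO : ∀ y, y ∈ O ↔ y ∈ orbit G x) (hBO : B ⊆ O) :
    #{g : G | g • x ∈ B} * #O = #B * Fintype.card G := by
  have hfiber : ∀ A ⊆ O, #{g : G | g • x ∈ A} = #A * #{g : G | g • x = x} := by
    intro A hA
    rw [card_eq_sum_card_fiberwise (s := {g : G | g • x ∈ A}) (t := A)
      fun g hg => (mem_filter.1 hg).2,
      ← smul_eq_mul, ← sum_const]
    refine sum_congr rfl fun y hy => ?_
    rw [filter_filter, card_filter_smul_eq_of_mem_orbit x ((hO y).1 (hA hy))]
    congr 1
    exact filter_congr fun g _ => and_iff_right_of_imp fun hg => hg ▸ hy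
  have hG : #{g : G | g • x ∈ O} = Fintype.card G := by
    rw [filter_true_of_mem fun g _ => (hO _).2 (mem_orbit x g), card_univ]
  rw [hfiber B hBO, ← hG, hfiber O subset_rfl]
  ring

end MulAction

namespace LinearEquiv

variable {K V : Type*} [Field K] [AddCommGroup V] [Module K V]

theorem exists_apply_eq_of_ne_zero {v w : V} (hv : v ≠ 0) (hw : w ≠ 0) :
    ∃ g : V ≃ₗ[K] V, g v = w := by
  obtain ⟨g, hg⟩ := Submodule.exists_linearEquiv_restrict_eq
    ((toSpanNonzeroSingleton K V v hv).symm ≪≫ₗ toSpanNonzeroSingleton K V w hw)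
  refine ⟨g, ?_⟩
  have hgv := hg ⟨v, Submodule.mem_span_singleton_self v⟩
  rw [trans_apply, ← coord, coord_self, toSpanNonzeroSingleton_one] at hgv
  exact hgv.symm

theorem mem_orbit_iff_ne_zero {v : V} (hv : v ≠ 0) {w : V} :
    w ∈ MulAction.orbit (V ≃ₗ[K] V) v ↔ w ≠ 0 := by
  constructor
  · rintro ⟨g, rfl⟩
    simpa [smul_def] using hv
  · intro hw
    obtain ⟨g, hg⟩ := exists_apply_eq_of_ne_zero (K := K) hv hw
    exact ⟨g, hg⟩

/-- Because of truncated subtraction, `hcard` holds trivially when `P` or `B` is empty; otherwise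
it is the union bound `#P * #B < #V - 1`, each `g p` being equidistributed on `V \ {0}`. -/
theorem exists_forall_apply_notMem [Fintype V] [DecidableEq V] {P B : Finset V}
    (hP : 0 ∉ P) (hB : 0 ∉ B) (hcard : #P * #B ≤ Fintype.card V - 2) :
    ∃ g : V ≃ₗ[K] V, ∀ p ∈ P, g p ∉ B := by
  rcases P.eq_empty_or_nonempty with rfl | ⟨p₀, hp₀⟩
  · exact ⟨refl K V, by simp⟩
  have : Finite (V ≃ₗ[K] V) := Finite.of_injective _ DFunLike.coe_injective
  have := Fintype.ofFinite (V ≃ₗ[K] V)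
  have hO : ∀ p ∈ P, ∀ y, y ∈ univ.erase 0 ↔ y ∈ MulAction.orbit (V ≃ₗ[K] V) p :=
    fun p hp y => by
      rw [mem_orbit_iff_ne_zero (ne_of_mem_of_not_mem hp hP), mem_erase, and_iff_left (mem_univ y)]
  have hBO : B ⊆ univ.erase 0 := fun y hy => mem_erase.2 ⟨ne_of_mem_of_not_mem hy hB, mem_univ y⟩
  have hV : 2 ≤ Fintype.card V := by
    have : ({0, p₀} : Finset V) ⊆ univ := subset_univ _
    simpa [card_pair (ne_of_mem_of_not_mem hp₀ hP).symm] using card_le_card this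
  set bad := P.biUnion fun p => {g : V ≃ₗ[K] V | g • p ∈ B}
  have hbad : #bad * (Fintype.card V - 1) ≤ (Fintype.card V - 2) * Fintype.card (V ≃ₗ[K] V) :=
    calc #bad * (Fintype.card V - 1)
        ≤ ∑ p ∈ P, #{g : V ≃ₗ[K] V | g • p ∈ B} * #(univ.erase (0 : V)) := by
          rw [card_erase_of_mem (mem_univ 0), card_univ, ← sum_mul]
          exact Nat.mul_le_mul_right _ card_biUnion_le
      _ = #P * #B * Fintype.card (V ≃ₗ[K] V) := by
          rw [sum_congr rfl fun p hp => MulAction.card_filter_smul_mem_mul_card p (hO p hp) hBO,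
            sum_const, smul_eq_mul, mul_assoc]
      _ ≤ (Fintype.card V - 2) * Fintype.card (V ≃ₗ[K] V) := Nat.mul_le_mul_right _ hcard
  have hlt : #bad < #(univ : Finset (V ≃ₗ[K] V)) := by
    refine Nat.lt_of_mul_lt_mul_right (a := Fintype.card V - 1) (hbad.trans_lt ?_)
    rw [card_univ, mul_comm]
    exact Nat.mul_lt_mul_of_pos_left (by omega) Fintype.card_pos
  obtain ⟨g, -, hg⟩ := exists_mem_notMem_of_card_lt_card hlt
  exact ⟨g, fun p hp hgp => hg (mem_biUnion.2 ⟨p, hp, by simpa [smul_def] using hgp⟩)⟩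

end LinearEquiv

theorem Submodule.exists_linearMap_ker_eq {K V : Type*} [Field K] [AddCommGroup V] [Module K V]
    [FiniteDimensional K V] (C : Submodule K V) {m : ℕ}
    (hm : Module.finrank K V - Module.finrank K C = m) :
    ∃ L : V →ₗ[K] (Fin m → K), LinearMap.ker L = C := by
  let e : (V ⧸ C) ≃ₗ[K] (Fin m → K) :=
    LinearEquiv.ofFinrankEq _ _ (by rw [C.finrank_quotient, Module.finrank_fin_fun, hm])
  exact ⟨e.toLinearMap ∘ₗ C.mkQ, by rw [LinearEquiv.ker_comp, Submodule.ker_mkQ]⟩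

theorem hammingNorm_sum_pi_single {ι R : Type*} [Fintype ι] [DecidableEq ι]
    [AddCommMonoidWithOne R] [NeZero (1 : R)] [DecidableEq R] (S : Finset ι) :
    hammingNorm (∑ j ∈ S, Pi.single j (1 : R)) = #S := by
  simp [hammingNorm, Finset.sum_apply, Pi.single_apply]

theorem ncard_setOf_eq_one_eq_hammingNorm {ι : Type*} [Fintype ι] (w : ι → ZMod 2) :
    Set.ncard {i | w i = 1} = hammingNorm w := by
  have hone : ∀ x : ZMod 2, x = 1 ↔ x ≠ 0 := by decide
  simp [hone, hammingNorm, ← Set.ncard_coe_finset]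

section ParityCheck

variable {n : ℕ}

theorem isParityCheck_iff_ker_mulVecLin {ι : Type*} (H : Matrix ι (Fin n) (ZMod 2))
    (C : Submodule (ZMod 2) (Fin n → ZMod 2)) :
    IsParityCheck H C ↔ LinearMap.ker H.mulVecLin = C := by
  simp only [IsParityCheck, SetLike.ext_iff, LinearMap.mem_ker, Matrix.mulVecLin_apply,
    funext_iff]
  rfl

theorem IsParityCheck.sub_finrank_le_card {ι : Type*} [Fintype ι] {H : ι → Fin n → ZMod 2}
    {C : Submodule (ZMod 2) (Fin n → ZMod 2)} (hH : IsParityCheck H C) :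
    n - Module.finrank (ZMod 2) C ≤ Fintype.card ι := by
  have hker := (isParityCheck_iff_ker_mulVecLin (Matrix.of H) C).1 hH
  have hrank := LinearMap.finrank_range_add_finrank_ker (Matrix.of H).mulVecLin
  rw [hker, Module.finrank_fin_fun] at hrank
  have := (Matrix.of H).rank_le_card_height
  rw [Matrix.rank] at this
  omega

variable {m : ℕ} (L : (Fin n → ZMod 2) →ₗ[ZMod 2] (Fin m → ZMod 2))

theorem isParityCheck_toMatrix'_iff (C : Submodule (ZMod 2) (Fin n → ZMod 2)) :
    IsParityCheck (LinearMap.toMatrix' L) C ↔ LinearMap.ker L = C := by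
  rw [isParityCheck_iff_ker_mulVecLin, ← Matrix.toLin'_apply', Matrix.toLin'_toMatrix']

theorem hasTrappingSet_toMatrix'_iff (a b : ℕ) :
    HasTrappingSet (LinearMap.toMatrix' L) a b ↔
      ∃ S : Finset (Fin n), #S = a ∧ hammingNorm (L (∑ j ∈ S, Pi.single j 1)) = b := by
  refine exists_congr fun S => and_congr_right fun _ => ?_
  simp only [LinearMap.toMatrix'_apply, map_sum, ← Finset.sum_fn,
    ncard_setOf_eq_one_eq_hammingNorm]

end ParityCheck

theorem card_biUnion_powersetCard_le {α : Type*} [Fintype α] [DecidableEq α] (s : Finset ℕ) :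
    #(s.biUnion fun u => powersetCard u (univ : Finset α)) ≤ ∑ u ∈ s, (Fintype.card α).choose u :=
  card_biUnion_le.trans_eq (by simp [card_powersetCard])

theorem card_filter_ne_zero_hammingNorm_lt_le (m b : ℕ) :
    #{w : Fin m → ZMod 2 | w ≠ 0 ∧ hammingNorm w < b} ≤ ∑ v ∈ Ico 1 b, m.choose v := by
  have hsupp : ∀ x y : ZMod 2, (x ≠ 0 ↔ y ≠ 0) → x = y := by decide
  calc #{w : Fin m → ZMod 2 | w ≠ 0 ∧ hammingNorm w < b}
      ≤ #((Ico 1 b).biUnion fun v => powersetCard v univ) :=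
        card_le_card_of_injOn (fun w => ({j | w j ≠ 0} : Finset (Fin m))) ?_ ?_
    _ ≤ ∑ v ∈ Ico 1 b, m.choose v :=
        (card_biUnion_powersetCard_le _).trans_eq (by rw [Fintype.card_fin])
  · intro w hw
    obtain ⟨-, hw0, hwb⟩ := mem_filter.1 (mem_coe.1 hw)
    exact mem_biUnion.2 ⟨hammingNorm w, mem_Ico.2 ⟨hammingNorm_pos_iff.2 hw0, hwb⟩,
      mem_powersetCard.2 ⟨subset_univ _, rfl⟩⟩
  · intro w _ w' _ h
    funext j
    exact hsupp _ _ (by simpa using congrArg (j ∈ ·) h)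

theorem gaussBinom2_nonneg (x y : ℕ) : 0 ≤ gaussBinom2 x y :=
  prod_nonneg fun _ _ => div_nonneg (sub_nonneg.2 (one_le_pow₀ one_le_two))
    (sub_nonneg.2 (one_le_pow₀ one_le_two))

theorem sum_choose_mul_lt_of_trappingBound_lt_one {n k a b : ℕ}
    (hlt : trappingBound n k a b (n - k) < 1) :
    (∑ u ∈ Icc 1 a, n.choose u) * ∑ i ∈ range (b + 1), i * (n - k).choose (b - i)
      < 2 ^ (n - k) := by
  have hsecond : 0 ≤ (∑ r ∈ range (n - k + 1), ((n - k - r : ℕ) : ℝ) * gaussBinom2 (n - k) r *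
      ∏ i ∈ range r, ((2 : ℝ) ^ (n - k) - 2 ^ i)) / 2 ^ ((n - k) * (n - k)) := by
    refine div_nonneg (sum_nonneg fun r hr => ?_) (by positivity)
    refine mul_nonneg (mul_nonneg (Nat.cast_nonneg _) (gaussBinom2_nonneg _ _))
      (prod_nonneg fun i hi => sub_nonneg.2 (pow_le_pow_right₀ one_le_two ?_))
    have := mem_range.1 hi
    have := mem_range.1 hr
    omega
  have hfirst := (le_add_of_nonneg_right hsecond).trans_lt hlt
  rw [div_lt_one (by positivity), ← sum_mul] at hfirst
  exact_mod_cast hfirst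

theorem add_sum_Ico_choose_le (t b : ℕ) :
    b + ∑ v ∈ Ico 1 b, t.choose v ≤ ∑ i ∈ range (b + 1), i * t.choose (b - i) := by
  rcases Nat.eq_zero_or_pos b with rfl | hb
  · simp
  calc b + ∑ v ∈ Ico 1 b, t.choose v
      ≤ ∑ v ∈ range b, (b - v) * t.choose v := by
        rw [range_eq_Ico, sum_eq_sum_Ico_succ_bot hb, Nat.sub_zero, t.choose_zero_right, mul_one]
        refine Nat.add_le_add_left (sum_le_sum fun v hv => ?_) b
        exact Nat.le_mul_of_pos_left _ (by have := (mem_Ico.1 hv).2; omega)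
    _ ≤ ∑ v ∈ range (b + 1), (b - v) * t.choose v :=
        sum_le_sum_of_subset (range_subset_range.2 b.le_succ)
    _ = ∑ i ∈ range (b + 1), i * t.choose (b - i) := by
        rw [← sum_range_reflect]
        refine sum_congr rfl fun i hi => ?_
        have := mem_range.1 hi
        rw [show b - (b + 1 - 1 - i) = i by omega, show b + 1 - 1 - i = b - i by omega]

theorem sum_choose_mul_sum_choose_le_of_trappingBound_lt_one {n k a b : ℕ}
    (hlt : trappingBound n k a b (n - k) < 1) :
    (∑ u ∈ Icc 1 a, n.choose u) * ∑ v ∈ Ico 1 b, (n - k).choose v ≤ 2 ^ (n - k) - 2 := by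
  have hlt' := (Nat.mul_le_mul_left _ (add_sum_Ico_choose_le (n - k) b)).trans_lt
    (sum_choose_mul_lt_of_trappingBound_lt_one hlt)
  rw [mul_add] at hlt'
  rcases Nat.eq_zero_or_pos ((∑ u ∈ Icc 1 a, n.choose u) * b) with h0 | hpos
  · rcases Nat.mul_eq_zero.1 h0 with hT | rfl
    · simp [hT]
    · simp
  · omega

theorem exists_isParityCheck_forall_not_hasTrappingSet {n k d a b : ℕ}
    (C : Submodule (ZMod 2) (Fin n → ZMod 2))
    (hk : Module.finrank (ZMod 2) C = k)
    (hd : ∀ c ∈ C, c ≠ 0 → d ≤ hammingNorm c) (had : a ≤ d - 1)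
    (hlt : trappingBound n k a b (n - k) < 1) :
    ∃ H : Fin (n - k) → Fin n → ZMod 2, IsParityCheck H C ∧
      ∀ u v : ℕ, 1 ≤ u → u ≤ a → v < b → ¬ HasTrappingSet H u v := by
  classical
  obtain ⟨L₀, hL₀⟩ := C.exists_linearMap_ker_eq (m := n - k) (by rw [Module.finrank_fin_fun, hk])
  let ind (S : Finset (Fin n)) : Fin n → ZMod 2 := ∑ j ∈ S, Pi.single j 1
  let 𝒮 := (Icc 1 a).biUnion fun u => powersetCard u (univ : Finset (Fin n))
  let B : Finset (Fin (n - k) → ZMod 2) := {w | w ≠ 0 ∧ hammingNorm w < b}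
  have hind : ∀ S ∈ 𝒮, L₀ (ind S) ≠ 0 := by
    intro S hS hzero
    obtain ⟨u, hu, hSu⟩ := mem_biUnion.1 hS
    rw [mem_Icc] at hu
    rw [mem_powersetCard] at hSu
    have hind_ne : ind S ≠ 0 := hammingNorm_pos_iff.1 (by rw [hammingNorm_sum_pi_single]; omega)
    have := hd _ (hL₀ ▸ LinearMap.mem_ker.2 hzero) hind_ne
    rw [hammingNorm_sum_pi_single] at this
    omega
  have hcard :
      #(𝒮.image fun S => L₀ (ind S)) * #B ≤ Fintype.card (Fin (n - k) → ZMod 2) - 2 := by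
    calc _ ≤ (∑ u ∈ Icc 1 a, n.choose u) * ∑ v ∈ Ico 1 b, (n - k).choose v := by
          refine Nat.mul_le_mul (card_image_le.trans ?_)
            (card_filter_ne_zero_hammingNorm_lt_le _ _)
          simpa using card_biUnion_powersetCard_le (α := Fin n) (Icc 1 a)
      _ ≤ _ := by
          simpa using sum_choose_mul_sum_choose_le_of_trappingBound_lt_one hlt
  obtain ⟨g, hg⟩ := LinearEquiv.exists_forall_apply_notMem (K := ZMod 2)
    (by simpa using hind) (by simp [B]) hcard
  refine ⟨LinearMap.toMatrix' (g.toLinearMap ∘ₗ L₀),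
    (isParityCheck_toMatrix'_iff _ C).2 (by rw [LinearEquiv.ker_comp, hL₀]), ?_⟩
  rintro u v hu hua hvb htrap
  obtain ⟨S, rfl, hS⟩ := (hasTrappingSet_toMatrix'_iff _ u v).1 htrap
  have hSmem : S ∈ 𝒮 :=
    mem_biUnion.2 ⟨#S, mem_Icc.2 ⟨hu, hua⟩, mem_powersetCard.2 ⟨subset_univ S, rfl⟩⟩
  refine hg _ (mem_image_of_mem _ hSmem) (mem_filter.2 ⟨mem_univ _, ?_, ?_⟩)
  · simpa using hind S hSmem
  · exact hS.trans_lt hvb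

theorem collective_trapping_redundancy_eq_of_bound_lt_one_general {n k d a b : ℕ}
    (C : Submodule (ZMod 2) (Fin n → ZMod 2))
    (hk : Module.finrank (ZMod 2) C = k)
    (hd₁ : ∀ c ∈ C, c ≠ 0 → d ≤ hammingNorm c)
    (had : a ≤ d - 1)
    (hlt : trappingBound n k a b (n - k) < 1) :
    (∃ H : Fin (n - k) → Fin n → ZMod 2, IsParityCheck H C ∧
      ∀ u v : ℕ, 1 ≤ u → u ≤ a → v < b → ¬ HasTrappingSet H u v) ∧
    collectiveTrappingRedundancy C a b = n - k := by
  obtain ⟨H, hH, hfree⟩ := exists_isParityCheck_forall_not_hasTrappingSet C hk hd₁ had hlt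
  refine ⟨⟨H, hH, hfree⟩, le_antisymm (Nat.sInf_le ⟨H, hH, hfree⟩) ?_⟩
  refine le_csInf ⟨n - k, H, hH, hfree⟩ ?_
  rintro m ⟨H', hH', -⟩
  simpa [hk] using hH'.sub_finrank_le_card

theorem collective_trapping_redundancy_eq_of_bound_lt_one {n k d a b : ℕ}
    (C : Submodule (ZMod 2) (Fin n → ZMod 2))
    (hk : Module.finrank (ZMod 2) C = k)
    (hd₁ : ∀ c ∈ C, c ≠ 0 → d ≤ hammingNorm c)
    (hd₂ : ∃ c ∈ C, c ≠ 0 ∧ hammingNorm c = d)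
    (ha : 1 ≤ a) (had : a ≤ d - 1)
    (hlt : trappingBound n k a b (n - k) < 1) :
    (∃ H : Fin (n - k) → Fin n → ZMod 2, IsParityCheck H C ∧
      ∀ u v : ℕ, 1 ≤ u → u ≤ a → v < b → ¬ HasTrappingSet H u v) ∧
    collectiveTrappingRedundancy C a b = n - k :=
  collective_trapping_redundancy_eq_of_bound_lt_one_general C hk hd₁ had hlt
end

section
/- Let C be a binary [n,k,d] linear code with d ≥ 2. Then the 2^{n-k} × n matrix whose rows are exactly the codewords of the dual code C^⊥ is an orthogonal array OA(2^{n-k}, n, 2, d-1); that is, for every set S of d-1 distinct coordinate positions and every vector v ∈ F_2^{d-1}, the number of codewords c ∈ C^⊥ whose restriction to S equals v satisfies (that number) · 2^{d-1} = 2^{n-k}. -/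
/-! The dual code `D = C^⊥` has dimension `n - k`. For `|S| < d` the restriction map
`D → F_2^S` is onto: a vector of `F_2^S` orthogonal to its image extends by zero to a vector of
`D^⊥ = C` supported in `S`, hence of weight `< d`, hence zero. Every fibre of the restriction is
then a coset of its kernel and has `2^(n-k-|S|)` elements. -/

open Finset

/-- `M` (an `m × n` matrix given by its rows, over an alphabet `Γ` of size `l`)
is an orthogonal array of strength `s`: in the submatrix determined by any `s`
distinct columns, every vector of length `s` appears exactly `m / l^s` times
as a row (stated multiplicatively: the count times `l^s` equals `m`). -/
def IsOrthogonalArray {m n : ℕ} {Γ : Type*} [Fintype Γ]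
    (M : Fin m → Fin n → Γ) (l s : ℕ) : Prop :=
  Fintype.card Γ = l ∧
  ∀ S : Finset (Fin n), S.card = s → ∀ v : Fin n → Γ,
    Set.ncard {i : Fin m | ∀ j ∈ S, M i j = v j} * l ^ s = m

open Module Matrix
open LinearMap (BilinForm)

section DotProduct

variable {R ι : Type*} [CommSemiring R] [Fintype ι]

theorem dotProductBilin_isRefl : BilinForm.IsRefl (dotProductBilin R R : BilinForm R (ι → R)) :=
  fun x y h => by simpa [dotProduct_comm] using h

theorem dotProductBilin_nondegenerate :
    (dotProductBilin R R : BilinForm R (ι → R)).Nondegenerate :=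
  ⟨fun x hx => dotProduct_eq_zero x hx,
    fun y hy => dotProduct_eq_zero y fun x => by simpa [dotProduct_comm] using hy x⟩

theorem dotProduct_extend_zero (S : Finset ι) (x : ι → R) (w : S → R) :
    x ⬝ᵥ Subtype.val.extend w 0 = (x ∘ Subtype.val) ⬝ᵥ w := by
  classical
  have hS : ∀ j ∉ S, x j * Subtype.val.extend w 0 j = 0 := fun j hj => by
    rw [Function.extend_apply' _ _ _ (by simpa using hj), Pi.zero_apply, mul_zero]
  rw [dotProduct, ← Finset.sum_subset S.subset_univ fun j _ => hS j, ← Finset.sum_coe_sort]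
  simp [dotProduct]

end DotProduct

theorem hammingNorm_le_card_of_eq_zero_of_notMem {ι β : Type*} [Fintype ι] [Zero β]
    [DecidableEq β] {w : ι → β} {S : Finset ι} (hw : ∀ j ∉ S, w j = 0) :
    hammingNorm w ≤ S.card :=
  Finset.card_le_card fun j hj => by
    by_contra hjS
    exact (Finset.mem_filter.1 hj).2 (hw j hjS)

section Restriction

variable {K ι : Type*} [Field K] [Fintype ι]

theorem restrict_orthogonal_surjective {W : Submodule K (ι → K)} {S : Finset ι}
    (hW : ∀ w ∈ W, (∀ j ∉ S, w j = 0) → w = 0) :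
    Function.Surjective ((LinearMap.funLeft K K ((↑) : S → ι)).domRestrict
      (BilinForm.orthogonal (dotProductBilin K K) W)) := by
  set π := (LinearMap.funLeft K K ((↑) : S → ι)).domRestrict
    (BilinForm.orthogonal (dotProductBilin K K) W)
  have h_orth : BilinForm.orthogonal (dotProductBilin K K) (LinearMap.range π) = ⊥ := by
    refine (Submodule.eq_bot_iff _).2 fun w hw => ?_
    have hext : Subtype.val.extend w 0 ∈ W := by
      rw [← BilinForm.orthogonal_orthogonal dotProductBilin_nondegenerate
        dotProductBilin_isRefl W]
      intro x hx
      exact (dotProduct_extend_zero S x w).trans (hw _ ⟨⟨x, hx⟩, rfl⟩)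
    have hzero := hW _ hext fun j hj => Function.extend_apply' _ _ _ (by simpa using hj)
    funext i
    simpa [Subtype.val_injective.extend_apply] using congrFun hzero i
  rw [← LinearMap.range_eq_top, ← BilinForm.orthogonal_orthogonal
    dotProductBilin_nondegenerate dotProductBilin_isRefl (LinearMap.range π), h_orth,
    BilinForm.orthogonal_bot]

theorem ncard_eqOn_mul_card_pow {D : Submodule K (ι → K)} {S : Finset ι}
    (hD : Function.Surjective ((LinearMap.funLeft K K ((↑) : S → ι)).domRestrict D))
    (v : ι → K) :
    {c ∈ (D : Set (ι → K)) | ∀ j ∈ S, c j = v j}.ncard * Nat.card K ^ S.card =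
      Nat.card K ^ finrank K D := by
  set π := (LinearMap.funLeft K K ((↑) : S → ι)).domRestrict D
  have hfiber : {c ∈ (D : Set (ι → K)) | ∀ j ∈ S, c j = v j} =
      Subtype.val '' (π ⁻¹' {v ∘ (↑)}) := by
    ext c
    constructor
    · rintro ⟨hc, hcv⟩
      exact ⟨⟨c, hc⟩, funext fun i => hcv i i.2, rfl⟩
    · rintro ⟨c, hc, rfl⟩
      exact ⟨c.2, fun j hj => congrFun hc ⟨j, hj⟩⟩
  have hker : finrank K (LinearMap.ker π) + S.card = finrank K D := by
    rw [add_comm, ← LinearMap.finrank_range_add_finrank_ker π, LinearMap.range_eq_top.2 hD,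
      finrank_top, finrank_fintype_fun_eq_card, Fintype.card_coe]
  have hcard : Nat.card (π ⁻¹' {v ∘ (↑)}) = Nat.card (LinearMap.ker π) :=
    Nat.card_congr (π.toAddMonoidHom.fiberEquivKerOfSurjective hD _)
  rw [hfiber, Set.ncard_image_of_injective _ Subtype.val_injective, ← Nat.card_coe_set_eq,
    hcard, ← hker, pow_add, natCard_eq_pow_finrank (K := K)]

end Restriction

theorem dualCode_eq_orthogonal {n : ℕ} (C : Submodule (ZMod 2) (Fin n → ZMod 2)) :
    dualCode C = BilinForm.orthogonal (dotProductBilin (ZMod 2) (ZMod 2)) C := by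
  ext v
  exact forall₂_congr fun c _ => by simp [dotProduct, mul_comm]

theorem ncard_dualCode_eqOn_mul_two_pow {n k d : ℕ} (C : Submodule (ZMod 2) (Fin n → ZMod 2))
    (hk : finrank (ZMod 2) C = k) (hd : ∀ c ∈ C, c ≠ 0 → d ≤ hammingNorm c)
    (S : Finset (Fin n)) (hS : S.card = d - 1) (v : Fin n → ZMod 2) :
    Set.ncard {c ∈ dualCode C | ∀ j ∈ S, c j = v j} * 2 ^ (d - 1) = 2 ^ (n - k) := by
  have hC : ∀ w ∈ C, (∀ j ∉ S, w j = 0) → w = 0 := fun w hw hwS => by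
    by_contra hw0
    have := hd w hw hw0
    have := hammingNorm_le_card_of_eq_zero_of_notMem hwS
    have := hammingNorm_pos_iff.2 hw0
    omega
  have := ncard_eqOn_mul_card_pow (restrict_orthogonal_surjective hC) v
  rwa [Nat.card_zmod, BilinForm.finrank_orthogonal dotProductBilin_nondegenerate,
    finrank_fin_fun, hk, hS, ← dualCode_eq_orthogonal] at this

theorem dual_code_is_orthogonal_array_general {n k d : ℕ}
    (C : Submodule (ZMod 2) (Fin n → ZMod 2))
    (hk : Module.finrank (ZMod 2) C = k)
    (hd₁ : ∀ c ∈ C, c ≠ 0 → d ≤ hammingNorm c) :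
    (∀ H : Fin (2 ^ (n - k)) → Fin n → ZMod 2,
      Function.Injective H → Set.range H = dualCode C →
      IsOrthogonalArray H 2 (d - 1)) ∧
    ∀ S : Finset (Fin n), S.card = d - 1 → ∀ v : Fin n → ZMod 2,
      Set.ncard {c ∈ dualCode C | ∀ j ∈ S, c j = v j} * 2 ^ (d - 1)
        = 2 ^ (n - k) := by
  have count := ncard_dualCode_eqOn_mul_two_pow C hk hd₁
  refine ⟨fun H hH hrange => ⟨ZMod.card 2, fun S hS v => ?_⟩, count⟩
  refine Eq.trans ?_ (count S hS v)
  rw [← hrange, ← Set.ncard_preimage_of_injective_subset_range hH (Set.sep_subset _ _)]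
  congr
  ext i
  simp

theorem dual_code_is_orthogonal_array {n k d : ℕ}
    (C : Submodule (ZMod 2) (Fin n → ZMod 2))
    (hk : Module.finrank (ZMod 2) C = k)
    (hd₁ : ∀ c ∈ C, c ≠ 0 → d ≤ hammingNorm c)
    (hd₂ : ∃ c ∈ C, c ≠ 0 ∧ hammingNorm c = d)
    (hd2 : 2 ≤ d) :
    (∀ H : Fin (2 ^ (n - k)) → Fin n → ZMod 2,
      Function.Injective H → Set.range H = dualCode C →
      IsOrthogonalArray H 2 (d - 1)) ∧
    ∀ S : Finset (Fin n), S.card = d - 1 → ∀ v : Fin n → ZMod 2,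
      Set.ncard {c ∈ dualCode C | ∀ j ∈ S, c j = v j} * 2 ^ (d - 1)
        = 2 ^ (n - k) :=
  dual_code_is_orthogonal_array_general C hk hd₁
end

section
/- Let C be a binary [n,k,d] linear code with k < n, let S be a nonempty set of coordinate positions with |S| ≤ d-1, and let t ≥ 0 and b ≥ 0 be integers. For a t-tuple (c_1, …, c_t) of codewords of C^⊥, let w denote the number of indices m for which c_m has odd Hamming weight on S. Then Σ over all t-tuples (c_1, …, c_t) ∈ (C^⊥)^t of max(b - w, 0) equals 2^{t(n-k) - t} · Σ_{i=1}^{b} i · C(t, b-i). In probabilistic terms, if the t codewords are drawn independently and uniformly at random from C^⊥, the expected value of max(b - w, 0) is 2^{-t} · Σ_{i=1}^{b} i · C(t, b-i). -/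
open Finset

/-!
The indicator vector `e` of `S` is nonzero of weight `|S| < d`, so `e ∉ C`, and a linear form
separating `e` from `C` is `v ↦ v ⬝ e` for some `v ∈ C^⊥`. Hence the parity functional
`v ↦ ∑_{i ∈ S} v i = e ⬝ v` is a nonzero linear form on `C^⊥`, and both of its fibres have
`2^(n-k-1)` elements. So every parity pattern in `F_2^t` is attained by exactly `2^(t(n-k-1))`
tuples of `(C^⊥)^t`, the sum becomes `2^(t(n-k-1)) ∑_j C(t,j) (b-j)₊`, and `i = b - j` turns
this into the right-hand side.
-/

open Module

theorem Finset.sum_piFinset_comp_of_card_fiber {ι α β M : Type*} [DecidableEq ι] [Fintype ι]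
    [Fintype β] [DecidableEq β] [AddCommMonoid M] (s : Finset α) (f : α → β) {N : ℕ}
    (hN : ∀ b, #{x ∈ s | f x = b} = N) (G : (ι → β) → M) :
    ∑ c ∈ Fintype.piFinset (fun _ : ι => s), G (f ∘ c) = N ^ Fintype.card ι • ∑ p, G p := by
  rw [← sum_fiberwise' _ (fun c => f ∘ c), smul_sum]
  refine sum_congr rfl fun p _ => ?_
  rw [sum_const]
  congr 1
  have hfiber : {c ∈ Fintype.piFinset (fun _ : ι => s) | f ∘ c = p}
      = Fintype.piFinset (fun m => {x ∈ s | f x = p m}) := by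
    ext c
    simp [funext_iff, forall_and]
  rw [hfiber, Fintype.card_piFinset, prod_congr rfl fun m _ => hN (p m), prod_const, card_univ]

theorem Finset.sum_fun_zmod_two_apply_card {ι M : Type*} [Fintype ι] [DecidableEq ι]
    [AddCommMonoid M] (g : ℕ → M) :
    ∑ p : ι → ZMod 2, g #{m | p m = 1}
      = ∑ j ∈ range (Fintype.card ι + 1), (Fintype.card ι).choose j • g j := by
  rw [← card_univ, ← sum_powerset_apply_card, powerset_univ]
  refine sum_nbij' (fun p => ({m | p m = 1} : Finset ι)) (fun s m => if m ∈ s then 1 else 0)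
    (by simp) (by simp) ?_ ?_ fun _ _ => rfl
  · intro p _
    funext m
    obtain h | h : p m = 0 ∨ p m = 1 := by generalize p m = a; revert a; decide
    all_goals simp [h]
  · intro s _
    ext m
    by_cases h : m ∈ s <;> simp [h]

theorem sum_range_choose_mul_tsub (t b : ℕ) :
    ∑ j ∈ range (t + 1), t.choose j * (b - j) = ∑ i ∈ Icc 1 b, i * t.choose (b - i) := by
  have hreflect : ∑ i ∈ Icc 1 b, i * t.choose (b - i) = ∑ j ∈ range b, t.choose j * (b - j) := by
    refine sum_nbij' (b - ·) (b - ·) ?_ ?_ ?_ ?_ fun i hi => ?_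
    any_goals intro i hi; simp only [mem_Icc, mem_range] at hi ⊢; omega
    rw [Nat.sub_sub_self (mem_Icc.1 hi).2, mul_comm]
  have hvanish : ∀ j, t < j ∨ b ≤ j → t.choose j * (b - j) = 0 := by
    rintro j (hj | hj)
    · rw [Nat.choose_eq_zero_of_lt hj, zero_mul]
    · rw [Nat.sub_eq_zero_of_le hj, mul_zero]
  rw [hreflect, sum_subset (range_subset_range.2 (Nat.le_add_left (t + 1) b)),
    sum_subset (range_subset_range.2 (Nat.le_add_right b (t + 1)))]
  all_goals
    intro j hj hj'
    simp only [mem_range] at hj hj'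
    exact hvanish j (by omega)

theorem Module.Dual.natCard_preimage_singleton {K V : Type*} [Field K]
    [AddCommGroup V] [Module K V] [Finite V] {φ : Dual K V} (hφ : φ ≠ 0) (a : K) :
    Nat.card (φ ⁻¹' {a}) = Nat.card K ^ (finrank K V - 1) := by
  have hker := φ.finrank_ker_add_one_of_ne_zero hφ
  change Nat.card (φ.toAddMonoidHom ⁻¹' {a}) = _
  rw [Nat.card_congr (φ.toAddMonoidHom.fiberEquivKerOfSurjective (LinearMap.surjective hφ) a)]
  rw [← hker, Nat.add_sub_cancel, ← Module.natCard_eq_pow_finrank]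
  rfl

section DualSubmodule

variable {K : Type*} [Field K] {n : ℕ}

def dualSubmodule (C : Submodule K (Fin n → K)) : Submodule K (Fin n → K) :=
  C.dualAnnihilator.comap (dotProductEquiv K (Fin n)).toLinearMap

theorem mem_dualSubmodule {C : Submodule K (Fin n → K)} {v : Fin n → K} :
    v ∈ dualSubmodule C ↔ ∀ c ∈ C, v ⬝ᵥ c = 0 := by
  simp [dualSubmodule, Submodule.mem_dualAnnihilator]

theorem finrank_dualSubmodule (C : Submodule K (Fin n → K)) :
    finrank K (dualSubmodule C) = n - finrank K C := by
  have hsum := Subspace.finrank_add_finrank_dualAnnihilator_eq C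
  rw [Module.finrank_fin_fun] at hsum
  have hcomap : finrank K (dualSubmodule C) = finrank K C.dualAnnihilator :=
    (LinearEquiv.ofSubmodule' (dotProductEquiv K (Fin n)) C.dualAnnihilator).finrank_eq
  omega

theorem exists_mem_dualSubmodule_dotProduct_ne_zero {C : Submodule K (Fin n → K)}
    {w : Fin n → K} (hw : w ∉ C) : ∃ v ∈ dualSubmodule C, v ⬝ᵥ w ≠ 0 := by
  obtain ⟨f, hfw, hfC⟩ := Submodule.exists_dual_map_eq_bot_of_notMem hw inferInstance
  obtain ⟨v, rfl⟩ := (dotProductEquiv K (Fin n)).surjective f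
  refine ⟨v, mem_dualSubmodule.2 fun c hc => ?_, by simpa using hfw⟩
  simpa [hfC] using Submodule.mem_map_of_mem (f := dotProductEquiv K (Fin n) v) hc

theorem natCard_dualSubmodule_dotProduct_eq [Finite K] {C : Submodule K (Fin n → K)}
    {w : Fin n → K} (hw : w ∉ C) (a : K) :
    Nat.card {v | v ∈ dualSubmodule C ∧ w ⬝ᵥ v = a} = Nat.card K ^ (n - finrank K C - 1) := by
  obtain ⟨v, hv, hvw⟩ := exists_mem_dualSubmodule_dotProduct_ne_zero hw
  set ψ : Dual K (dualSubmodule C) := (dotProductEquiv K (Fin n) w).domRestrict _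
  have hψ : ψ ≠ 0 := fun h => hvw (by rw [dotProduct_comm]; exact LinearMap.congr_fun h ⟨v, hv⟩)
  rw [← finrank_dualSubmodule, ← ψ.natCard_preimage_singleton hψ a]
  exact Nat.card_congr (Equiv.subtypeSubtypeEquivSubtypeInter _ _).symm

theorem natCard_dualSubmodule_sum_eq [Finite K] [DecidableEq K] {d : ℕ}
    {C : Submodule K (Fin n → K)} (hd : ∀ c ∈ C, c ≠ 0 → d ≤ hammingNorm c)
    {S : Finset (Fin n)} (hS : S.Nonempty) (hSd : #S < d) (a : K) :
    Nat.card {v | v ∈ dualSubmodule C ∧ ∑ i ∈ S, v i = a} = Nat.card K ^ (n - finrank K C - 1) := by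
  set e : Fin n → K := fun j => if j ∈ S then 1 else 0
  have hweight : hammingNorm e = #S := by simp [e, hammingNorm]
  have he : e ∉ C := fun h => by
    have := hd e h (hammingNorm_pos_iff.1 (hweight ▸ hS.card_pos))
    omega
  have hparity : ∀ v : Fin n → K, ∑ i ∈ S, v i = e ⬝ᵥ v := fun v => by
    simp [e, dotProduct, ite_mul]
  simp_rw [hparity]
  exact natCard_dualSubmodule_dotProduct_eq he a

end DualSubmodule

theorem coe_dualSubmodule_eq_dualCode {n : ℕ} (C : Submodule (ZMod 2) (Fin n → ZMod 2)) :
    (dualSubmodule C : Set (Fin n → ZMod 2)) = dualCode C := by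
  ext v
  simp [mem_dualSubmodule, dualCode, dotProduct]

open scoped Classical in
theorem sum_deficiency_over_tuples_general {n k d t b : ℕ}
    (C : Submodule (ZMod 2) (Fin n → ZMod 2))
    (hk : Module.finrank (ZMod 2) C = k)
    (hd₁ : ∀ c ∈ C, c ≠ 0 → d ≤ hammingNorm c)
    (S : Finset (Fin n)) (hS : S.Nonempty) (hSd : S.card ≤ d - 1) :
    (∑ c : Fin t → Fin n → ZMod 2,
        if ∀ m, c m ∈ dualCode C then
          b - Set.ncard {m : Fin t | ∑ i ∈ S, c m i = 1}
        else 0)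
      = 2 ^ (t * (n - k) - t) * ∑ i ∈ Finset.Icc 1 b, i * t.choose (b - i) := by
  set D := univ.filter (· ∈ dualCode C)
  have hfiber : ∀ a, #{v ∈ D | ∑ i ∈ S, v i = a} = 2 ^ (n - k - 1) := fun a => by
    have hcount := natCard_dualSubmodule_sum_eq hd₁ hS (by have := hS.card_pos; omega) a
    rw [Nat.card_zmod, hk] at hcount
    rw [← hcount, ← Nat.card_eq_finsetCard]
    exact Nat.card_congr (Equiv.setCongr (by ext; simp [D, ← coe_dualSubmodule_eq_dualCode]))
  have htuples : univ.filter (fun c : Fin t → Fin n → ZMod 2 => ∀ m, c m ∈ dualCode C)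
      = Fintype.piFinset fun _ => D := by
    ext
    simp [D]
  rw [← sum_filter, htuples]
  calc _ = (2 ^ (n - k - 1)) ^ Fintype.card (Fin t)
          • ∑ p : Fin t → ZMod 2, (b - #{m | p m = 1}) := by
        rw [← sum_piFinset_comp_of_card_fiber _ _ hfiber]
        refine sum_congr rfl fun c _ => ?_
        simp [Set.ncard_eq_toFinset_card']
    _ = (2 ^ (n - k - 1)) ^ t * ∑ j ∈ range (t + 1), t.choose j * (b - j) := by
        simp [sum_fun_zmod_two_apply_card]
    _ = _ := by
        rw [sum_range_choose_mul_tsub, ← pow_mul, Nat.sub_mul, one_mul, mul_comm (n - k)]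

open scoped Classical in
/-- The sum over all `t`-tuples of dual codewords of `max(b - w, 0)`, where `w`
is the number of entries with odd weight on `S`, equals
`2^{t(n-k) - t} · Σ_{i=1}^{b} i · C(t, b-i)`.  (In `ℕ`, `b - w` is truncated
subtraction, i.e. `max(b - w, 0)`.) -/
theorem sum_deficiency_over_tuples {n k d t b : ℕ}
    (C : Submodule (ZMod 2) (Fin n → ZMod 2))
    (hk : Module.finrank (ZMod 2) C = k)
    (hd₁ : ∀ c ∈ C, c ≠ 0 → d ≤ hammingNorm c)
    (hd₂ : ∃ c ∈ C, c ≠ 0 ∧ hammingNorm c = d)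
    (hkn : k < n)
    (S : Finset (Fin n)) (hS : S.Nonempty) (hSd : S.card ≤ d - 1) :
    (∑ c : Fin t → Fin n → ZMod 2,
        if ∀ m, c m ∈ dualCode C then
          b - Set.ncard {m : Fin t | ∑ i ∈ S, c m i = 1}
        else 0)
      = 2 ^ (t * (n - k) - t) * ∑ i ∈ Finset.Icc 1 b, i * t.choose (b - i) :=
  sum_deficiency_over_tuples_general C hk hd₁ S hS hSd
end

section
/- Let C be a binary [n,k,d] linear code with k < n, let 1 ≤ a ≤ d-1 and b ≥ 0, and let H_t be any t × n matrix over F_2 all of whose rows belong to C^⊥. For a nonempty set S of column positions, let odd(S) denote the number of rows of H_t with odd Hamming weight on S. Define Z = (n - k - rank(H_t)) + Σ_{u=1}^{a} Σ_{S : |S| = u} max(b - odd(S), 0). Then there exists a parity-check matrix H for C with at most t + Z rows, obtained by appending at most Z rows from C^⊥ to H_t, such that H contains no (u,v)-trapping set for any 1 ≤ u ≤ a and 0 ≤ v ≤ b-1. -/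
open Finset

/-- The number of rows of `H` having odd Hamming weight on the column set `S`. -/
noncomputable def oddRows {n : ℕ} {ι : Type*} (H : ι → Fin n → ZMod 2)
    (S : Finset (Fin n)) : ℕ :=
  Set.ncard {i : ι | ∑ j ∈ S, H i j = 1}

/-! Let `D = C^⊥`. Since `D^⊥ = C`, a matrix whose rows lie in `D` is a parity-check matrix
for `C` as soon as its rows span `D`, so the rows of `H_t` are first completed to a spanning
set of `D` by `n - k - rank H_t` further vectors of `D`. For a column set `S` with
`1 ≤ |S| ≤ a < d`, the indicator vector of `S` is nonzero of weight `< d`, hence not in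
`C = D^⊥`: some `h ∈ D` has odd weight on `S`. Appending `b - odd(S)` copies of such an `h`
for every such `S` leaves at least `b` rows odd on `S`, which excludes every
`(|S|, v)`-trapping set with `v < b`. -/

open Module Submodule

theorem Submodule.exists_fin_sup_span_eq {K V : Type*} [DivisionRing K] [AddCommGroup V]
    [Module K V] {W D : Submodule K V} [FiniteDimensional K D] (hWD : W ≤ D) :
    ∃ g : Fin (finrank K D - finrank K W) → V, W ⊔ span K (Set.range g) = D := by
  obtain ⟨U, hWU, hD⟩ := IsModularLattice.exists_disjoint_and_sup_eq hWD
  have := finiteDimensional_of_le hWD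
  have := finiteDimensional_of_le (hD ▸ le_sup_right : U ≤ D)
  have hU : finrank K U = finrank K D - finrank K W := by
    have := finrank_sup_add_finrank_inf_eq W U
    rw [hWU.eq_bot, finrank_bot, hD] at this
    omega
  let b := finBasisOfFinrankEq K U hU
  have hb : span K (Set.range (U.subtype ∘ b)) = U := by
    rw [Set.range_comp, span_image, b.span_eq, map_subtype_top]
  exact ⟨U.subtype ∘ b, hb.symm ▸ hD⟩

section DotDual

variable {K ι : Type*} [Field K] [Fintype ι]

theorem dotProductBilin_isRefl_s12 :
    LinearMap.IsRefl (dotProductBilin K K : LinearMap.BilinForm K (ι → K)) :=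
  fun x y h => by simpa [dotProduct_comm] using h

theorem dotProductBilin_nondegenerate_s12 :
    LinearMap.BilinForm.Nondegenerate (dotProductBilin K K : LinearMap.BilinForm K (ι → K)) :=
  dotProductBilin_isRefl_s12.nondegenerate_iff_separatingLeft.2 dotProduct_eq_zero

def dotDual (C : Submodule K (ι → K)) : Submodule K (ι → K) :=
  LinearMap.BilinForm.orthogonal (dotProductBilin K K) C

theorem mem_dotDual {C : Submodule K (ι → K)} {v : ι → K} :
    v ∈ dotDual C ↔ ∀ c ∈ C, v ⬝ᵥ c = 0 :=
  forall₂_congr fun c _ => by rw [dotProduct_comm]; rfl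

theorem finrank_dotDual (C : Submodule K (ι → K)) :
    finrank K (dotDual C) = Fintype.card ι - finrank K C := by
  rw [dotDual, LinearMap.BilinForm.finrank_orthogonal dotProductBilin_nondegenerate_s12,
    finrank_fintype_fun_eq_card]

theorem dotDual_dotDual (C : Submodule K (ι → K)) : dotDual (dotDual C) = C :=
  LinearMap.BilinForm.orthogonal_orthogonal (B := dotProductBilin K K)
    dotProductBilin_nondegenerate_s12 dotProductBilin_isRefl_s12 C

theorem mem_dotDual_span_range_iff {κ : Type*} {x : ι → K} (H : κ → ι → K) :
    x ∈ dotDual (span K (Set.range H)) ↔ ∀ i, H i ⬝ᵥ x = 0 := by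
  rw [mem_dotDual]
  change span K (Set.range H) ≤ LinearMap.ker (dotProductBilin K K x) ↔ _
  simp [span_le, Set.range_subset_iff, dotProduct_comm]

theorem exists_mem_dotDual_dotProduct_ne_zero {C : Submodule K (ι → K)} {x : ι → K}
    (hx : x ∉ C) : ∃ h ∈ dotDual C, h ⬝ᵥ x ≠ 0 := by
  rw [← dotDual_dotDual C, mem_dotDual] at hx
  push Not at hx
  obtain ⟨h, hh, hne⟩ := hx
  exact ⟨h, hh, by rwa [dotProduct_comm]⟩

theorem exists_mem_dotDual_sum_ne_zero [DecidableEq K] {C : Submodule K (ι → K)} {d : ℕ}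
    (hd : ∀ c ∈ C, c ≠ 0 → d ≤ hammingNorm c) {S : Finset ι} (hS : S.Nonempty) (hSd : #S < d) :
    ∃ h ∈ dotDual C, ∑ j ∈ S, h j ≠ 0 := by
  classical
  set x : ι → K := (S : Set ι).indicator 1
  have hx : hammingNorm x = #S := by
    simp [x, hammingNorm, Set.indicator_apply]
  have hxC : x ∉ C := fun hxC =>
    (hd x hxC (hammingNorm_pos_iff.1 (hx ▸ hS.card_pos))).not_gt (hx ▸ hSd)
  obtain ⟨h, hh, hne⟩ := exists_mem_dotDual_dotProduct_ne_zero hxC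
  exact ⟨h, hh, by simpa [x, dotProduct, Set.indicator_apply] using hne⟩

end DotDual

section Binary

variable {n : ℕ}

theorem exists_mem_dotDual_sum_eq_one {ι : Type*} [Fintype ι]
    {C : Submodule (ZMod 2) (ι → ZMod 2)} {d : ℕ} (hd : ∀ c ∈ C, c ≠ 0 → d ≤ hammingNorm c)
    {S : Finset ι} (hS : S.Nonempty) (hSd : #S < d) : ∃ h ∈ dotDual C, ∑ j ∈ S, h j = 1 := by
  obtain ⟨h, hh, hne⟩ := exists_mem_dotDual_sum_ne_zero hd hS hSd
  exact ⟨h, hh, (by decide : ∀ z : ZMod 2, z ≠ 0 → z = 1) _ hne⟩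

theorem coe_dotDual_eq_dualCode (C : Submodule (ZMod 2) (Fin n → ZMod 2)) :
    (dotDual C : Set (Fin n → ZMod 2)) = dualCode C :=
  Set.ext fun _ => mem_dotDual

theorem isParityCheck_of_span_range_eq {κ : Type*} {H : κ → Fin n → ZMod 2}
    {C : Submodule (ZMod 2) (Fin n → ZMod 2)} (hH : span (ZMod 2) (Set.range H) = dotDual C) :
    IsParityCheck H C := fun x => by
  rw [← dotDual_dotDual C, ← hH, mem_dotDual_span_range_iff]
  rfl

theorem oddRows_sumElim {κ κ' : Type*} [Finite κ] [Finite κ'] (H : κ → Fin n → ZMod 2)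
    (E : κ' → Fin n → ZMod 2) (S : Finset (Fin n)) :
    oddRows (Sum.elim H E) S = oddRows H S + oddRows E S := by
  have hsplit : {i | ∑ j ∈ S, Sum.elim H E i j = 1} =
      Sum.inl '' {i | ∑ j ∈ S, H i j = 1} ∪ Sum.inr '' {i | ∑ j ∈ S, E i j = 1} := by
    ext (i | i) <;> simp
  rw [oddRows, hsplit, Set.ncard_union_eq (by simp [Set.disjoint_left]),
    Set.ncard_image_of_injective _ Sum.inl_injective,
    Set.ncard_image_of_injective _ Sum.inr_injective]
  rfl

theorem oddRows_comp_equiv {κ κ' : Type*} (H : κ → Fin n → ZMod 2) (e : κ' ≃ κ)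
    (S : Finset (Fin n)) : oddRows (H ∘ e) S = oddRows H S :=
  Set.ncard_preimage_of_injective_subset_range (s := {i | ∑ j ∈ S, H i j = 1}) e.injective
    (by simp)

theorem le_oddRows_sigma {σ : Type*} [Finite σ] (m : σ → ℕ) (r : σ → Fin n → ZMod 2) {s : σ}
    {S : Finset (Fin n)} (hs : ∑ j ∈ S, r s j = 1) :
    m s ≤ oddRows (fun x : Σ s, Fin (m s) => r x.1) S :=
  calc m s = (Set.range (Sigma.mk (β := fun s => Fin (m s)) s)).ncard := by
        rw [Set.ncard_range_of_injective sigma_mk_injective, Nat.card_eq_fintype_card,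
          Fintype.card_fin]
    _ ≤ _ := Set.ncard_le_ncard (Set.range_subset_iff.2 fun _ => hs) (Set.toFinite _)

end Binary

theorem append_rows_to_avoid_trapping_sets_general {n k d a b t : ℕ}
    (C : Submodule (ZMod 2) (Fin n → ZMod 2))
    (hk : Module.finrank (ZMod 2) C = k)
    (hd₁ : ∀ c ∈ C, c ≠ 0 → d ≤ hammingNorm c)
    (had : a ≤ d - 1)
    (Ht : Fin t → Fin n → ZMod 2) (hrows : ∀ i, Ht i ∈ dualCode C) :
    ∃ (s : ℕ) (E : Fin s → Fin n → ZMod 2),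
      s ≤ (n - k - Module.finrank (ZMod 2)
              (Submodule.span (ZMod 2) (Set.range Ht)))
          + ∑ u ∈ Finset.Icc 1 a,
              ∑ S ∈ Finset.powersetCard u (Finset.univ : Finset (Fin n)),
                (b - oddRows Ht S) ∧
      (∀ i, E i ∈ dualCode C) ∧
      IsParityCheck (Sum.elim Ht E) C ∧
      ∀ u v : ℕ, 1 ≤ u → u ≤ a → v < b →
        ¬ HasTrappingSet (Sum.elim Ht E) u v := by
  have hWD : span (ZMod 2) (Set.range Ht) ≤ dotDual C := span_le.2 <|
    Set.range_subset_iff.2 fun i => (coe_dotDual_eq_dualCode C).symm ▸ hrows i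
  obtain ⟨g, hg⟩ := exists_fin_sup_span_eq hWD
  let 𝒮 := (Icc 1 a).biUnion fun u => powersetCard u (univ : Finset (Fin n))
  have mem_𝒮 {S : Finset (Fin n)} : S ∈ 𝒮 ↔ 1 ≤ #S ∧ #S ≤ a := by simp [𝒮]
  choose r hrD hr using fun S : 𝒮 => have hS := mem_𝒮.1 S.2
    exists_mem_dotDual_sum_eq_one hd₁ (card_pos.1 hS.1) (by omega)
  let m : 𝒮 → ℕ := fun S => b - oddRows Ht S
  let F := Sum.elim g fun x : Σ S, Fin (m S) => r x.1
  let e := Fintype.equivFin (Fin (finrank (ZMod 2) (dotDual C) -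
    finrank (ZMod 2) (span (ZMod 2) (Set.range Ht))) ⊕ Σ S, Fin (m S))
  have hspan : span (ZMod 2) (Set.range (Sum.elim Ht (F ∘ e.symm))) = dotDual C := by
    rw [Set.Sum.elim_range, EquivLike.range_comp, Set.Sum.elim_range, span_union, span_union,
      ← sup_assoc, hg, sup_eq_left, span_le]
    rintro _ ⟨x, rfl⟩
    exact hrD x.1
  refine ⟨_, F ∘ e.symm, le_of_eq ?_, fun i => ?_, isParityCheck_of_span_range_eq hspan, ?_⟩
  · simp only [Fintype.card_sum, Fintype.card_fin, Fintype.card_sigma, finrank_dotDual, hk]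
    rw [sum_coe_sort 𝒮 fun S => b - oddRows Ht S,
      sum_biUnion ((pairwise_disjoint_powersetCard _).set_pairwise _)]
  · rw [← coe_dotDual_eq_dualCode]
    exact hspan.le (subset_span ⟨Sum.inr i, rfl⟩)
  · rintro u v hu hua hv ⟨S, rfl, hS⟩
    have hR : b - oddRows Ht S ≤ oddRows (fun x : Σ S, Fin (m S) => r x.1) S :=
      le_oddRows_sigma m r (s := ⟨S, mem_𝒮.2 ⟨hu, hua⟩⟩) (hr _)
    rw [← oddRows, oddRows_sumElim, oddRows_comp_equiv, oddRows_sumElim] at hS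
    omega

theorem append_rows_to_avoid_trapping_sets {n k d a b t : ℕ}
    (C : Submodule (ZMod 2) (Fin n → ZMod 2))
    (hk : Module.finrank (ZMod 2) C = k)
    (hd₁ : ∀ c ∈ C, c ≠ 0 → d ≤ hammingNorm c)
    (hd₂ : ∃ c ∈ C, c ≠ 0 ∧ hammingNorm c = d)
    (hkn : k < n) (ha : 1 ≤ a) (had : a ≤ d - 1)
    (Ht : Fin t → Fin n → ZMod 2) (hrows : ∀ i, Ht i ∈ dualCode C) :
    ∃ (s : ℕ) (E : Fin s → Fin n → ZMod 2),
      s ≤ (n - k - Module.finrank (ZMod 2)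
              (Submodule.span (ZMod 2) (Set.range Ht)))
          + ∑ u ∈ Finset.Icc 1 a,
              ∑ S ∈ Finset.powersetCard u (Finset.univ : Finset (Fin n)),
                (b - oddRows Ht S) ∧
      (∀ i, E i ∈ dualCode C) ∧
      IsParityCheck (Sum.elim Ht E) C ∧
      ∀ u v : ℕ, 1 ≤ u → u ≤ a → v < b →
        ¬ HasTrappingSet (Sum.elim Ht E) u v :=
  append_rows_to_avoid_trapping_sets_general C hk hd₁ had Ht hrows
end
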